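/- In every ∞-algebra, the infinitary power operation is additive: for all a, b, (a + b)^∞ = a^∞ + b^∞. -/
import Mathlib


/-- An absorptive commutative semiring: a commutative semiring with `1 + a = 1`
for all `a`, equipped with its natural order `a ≤ b ↔ a + b = b` (a partial
order by idempotence). -/
class AbsorptiveSemiring (K : Type*) extends CommSemiring K, PartialOrder K where
  absorb : ∀ a : K, 1 + a = 1
  le_iff_add : ∀ a b : K, a ≤ b ↔ a + b = b

/-- An `∞`-algebra: an absorptive commutative semiring with a unary operation
`a ↦ a^∞` satisfying the axioms (∞-abs) `a^∞ = a · a^∞` and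
(∞-ind) `b ≤ c + a·b → b ≤ c + a^∞·b`. -/
class InfAlgebra (K : Type*) extends AbsorptiveSemiring K where
  infPow : K → K
  infPow_abs : ∀ a : K, infPow a = a * infPow a
  infPow_ind : ∀ a b c : K, b ≤ c + a * b → b ≤ c + infPow a * b

open InfAlgebra

section Aux
variable {K : Type*} [InfAlgebra K]

private lemma le_def' (a b : K) : a ≤ b ↔ a + b = b :=
  AbsorptiveSemiring.le_iff_add a b

private lemma add_idem' (a : K) : a + a = a := by
  have h := congrArg (· * a) (AbsorptiveSemiring.absorb (1 : K))
  simpa [add_mul] using h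

private lemma le_one' (a : K) : a ≤ 1 := by
  rw [le_def', add_comm]; exact AbsorptiveSemiring.absorb a

private lemma le_add_left' (a b : K) : a ≤ a + b := by
  rw [le_def', ← add_assoc, add_idem']

private lemma sup_le' {a b c : K} (h1 : a ≤ c) (h2 : b ≤ c) : a + b ≤ c := by
  rw [le_def'] at h1 h2 ⊢
  rw [add_assoc, h2, h1]

private lemma mul_le_right' {a b : K} (c : K) (h : a ≤ b) : a * c ≤ b * c := by
  rw [le_def'] at h ⊢
  rw [← add_mul, h]

private lemma mul_le_left' {a b : K} (c : K) (h : a ≤ b) : c * a ≤ c * b := by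
  rw [mul_comm c a, mul_comm c b]; exact mul_le_right' c h

private lemma add_le_left' {a b : K} (c : K) (h : a ≤ b) : c + a ≤ c + b := by
  rw [le_def'] at h ⊢
  have e : c + a + (c + b) = c + c + (a + b) := by ring
  rw [e, add_idem', h]

private lemma le_infPow' {a b : K} (h : b ≤ a * b) : b ≤ infPow a := by
  have h' : b ≤ 0 + a * b := by simpa using h
  have h2 := infPow_ind a b 0 h'
  rw [zero_add] at h2
  calc b ≤ infPow a * b := h2
    _ ≤ infPow a * 1 := mul_le_left' _ (le_one' b)
    _ = infPow a := mul_one _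

end Aux

/-- in every `∞`-algebra, `(a + b)^∞ = a^∞ + b^∞`. -/
theorem infPow_add {K : Type*} [InfAlgebra K] (a b : K) :
    infPow (a + b) = infPow a + infPow b := by
  apply le_antisymm
  · -- (a+b)^∞ ≤ a^∞ + b^∞
    set c := infPow (a + b) with hc
    have h0 : c ≤ b * c + a * c := by
      have : c = b * c + a * c := by
        rw [hc]; nth_rewrite 1 [infPow_abs (a + b)]
        ring
      exact le_of_eq this
    have h1 : c ≤ b * c + infPow a * c := infPow_ind a c (b * c) h0
    have h2 : c ≤ infPow a + b * c := by
      calc c ≤ b * c + infPow a * c := h1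
        _ ≤ b * c + infPow a := by
            apply add_le_left'
            calc infPow a * c ≤ infPow a * 1 := mul_le_left' _ (le_one' c)
              _ = infPow a := mul_one _
        _ = infPow a + b * c := add_comm _ _
    have h3 : c ≤ infPow a + infPow b * c := infPow_ind b c (infPow a) h2
    calc c ≤ infPow a + infPow b * c := h3
      _ ≤ infPow a + infPow b := by
          apply add_le_left'
          calc infPow b * c ≤ infPow b * 1 := mul_le_left' _ (le_one' c)
            _ = infPow b := mul_one _
  · -- a^∞ + b^∞ ≤ (a+b)^∞
    apply sup_le'
    · apply le_infPow'
      calc infPow a = a * infPow a := infPow_abs a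
        _ ≤ (a + b) * infPow a := mul_le_right' _ (le_add_left' a b)
    · apply le_infPow'
      calc infPow b = b * infPow b := infPow_abs b
        _ ≤ (a + b) * infPow b := mul_le_right' _ (by rw [add_comm]; exact le_add_left' b a)
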